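/- arXiv:2311.07143 — 2 statements merged into one kernel-verified Lean document; each statement's English description precedes it below -/
import Mathlib

section
/- Let G be a group acting on spaces X and Y via representations ρ_X and ρ_Y, let μ(·|x) be a family of probability measures on G that is G-equivariant in the sense μ(A | ρ_X(g') x) = μ(g' A | x) for all g' ∈ G, measurable A ⊆ G, x ∈ X. Then for any (measurable, suitably integrable) function φ: X → Y, the symmetrized function Φ(x) = E_{g ∼ μ(·|x)}[ρ_Y(g) φ(ρ_X(g)⁻¹ x)] is G-equivariant: Φ(ρ_X(g') x) = ρ_Y(g') Φ(x). -/
open MeasureTheory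

/-- Symmetrization over a G-equivariant probability kernel μ(·|x) yields a
G-equivariant function Φ(x) = E_{g∼μ(·|x)}[ρ_Y(g) φ(ρ_X(g)⁻¹ x)]. -/
theorem stmt_11 (G X Y : Type*) [Group G] [MeasurableSpace G]
    [AddCommGroup X] [Module ℝ X]
    [NormedAddCommGroup Y] [NormedSpace ℝ Y] [CompleteSpace Y]
    (ρX : G →* (X ≃ₗ[ℝ] X)) (ρY : G →* (Y ≃ₗ[ℝ] Y))
    (hρYcont : ∀ g : G, Continuous (ρY g))
    (μ : X → Measure G) (hprob : ∀ x, IsProbabilityMeasure (μ x))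
    (hequiv : ∀ (g' : G) (x : X),
      μ (ρX g' x) = Measure.map (fun g => g' * g) (μ x))
    (φ : X → Y)
    (hint : ∀ x : X, Integrable (fun g : G => ρY g (φ ((ρX g)⁻¹ x))) (μ x))
    (Φ : X → Y)
    (hΦ : ∀ x, Φ x = ∫ g, ρY g (φ ((ρX g)⁻¹ x)) ∂(μ x)) :
    ∀ (g' : G) (x : X), Φ (ρX g' x) = ρY g' (Φ x) := by
  intro g' x
  -- the translation map is a.e.-measurable, since otherwise the pushforward
  -- would be the zero measure, contradicting that μ (ρX g' x) is a probability
  have haem : AEMeasurable (fun g => g' * g) (μ x) := by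
    by_contra h
    have h0 : Measure.map (fun g => g' * g) (μ x) = 0 :=
      Measure.map_of_not_aemeasurable h
    have := (hprob (ρX g' x)).measure_univ
    rw [hequiv g' x, h0] at this
    simp at this
  -- F is the integrand at the translated point
  set F : G → Y := fun g => ρY g (φ ((ρX g)⁻¹ (ρX g' x))) with hF
  have hFmeas : AEStronglyMeasurable F (Measure.map (fun g => g' * g) (μ x)) := by
    have := (hint (ρX g' x)).aestronglyMeasurable
    rwa [hequiv g' x] at this
  have hinv : ((ρX g')⁻¹ : X ≃ₗ[ℝ] X) ((ρX g') x) = x := (ρX g').symm_apply_apply x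
  have hcomp : ∀ g : G, F (g' * g) = ρY g' (ρY g (φ ((ρX g)⁻¹ x))) := by
    intro g
    simp only [hF, map_mul]
    show (ρY g') ((ρY g) (φ ((ρX g)⁻¹ ((ρX g')⁻¹ ((ρX g') x))))) =
      (ρY g') ((ρY g) (φ ((ρX g)⁻¹ x)))
    rw [hinv]
  -- continuous linear map version of ρY g'
  let T : Y →L[ℝ] Y :=
    { toLinearMap := (ρY g' : Y ≃ₗ[ℝ] Y).toLinearMap, cont := hρYcont g' }
  calc Φ (ρX g' x) = ∫ g, F g ∂(μ (ρX g' x)) := hΦ _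
    _ = ∫ g, F g ∂(Measure.map (fun g => g' * g) (μ x)) := by rw [hequiv g' x]
    _ = ∫ g, F (g' * g) ∂(μ x) := integral_map haem hFmeas
    _ = ∫ g, T (ρY g (φ ((ρX g)⁻¹ x))) ∂(μ x) := by
        simp only [hcomp]; rfl
    _ = T (∫ g, ρY g (φ ((ρX g)⁻¹ x)) ∂(μ x)) := (T.integral_comp_comm (hint x))
    _ = ρY g' (Φ x) := by rw [hΦ x]; rfl
end

section
/- Let G act on X and Y via ρ_X, ρ_Y, let h(g|x) be a G-equivariant probability kernel supported on a compact subset M ⊆ G uniformly over a compact set K ⊆ X, and suppose ρ_Y is continuous. If φ can approximate any continuous function arbitrarily well on compact sets, then for any continuous G-equivariant ψ: X → Y and ε > 0, there is a choice of φ so that the symmetrized function κ(x) = E_{h(g|x)}[ρ_Y(g) φ(ρ_X(g)⁻¹ x)] satisfies ‖ψ(x) − κ(x)‖ ≤ ε for all x ∈ K. Key inequality: ‖ψ(x) − κ(x)‖ ≤ (max_{g ∈ M} ‖ρ_Y(g)‖) · sup_{g ∈ M} ‖ψ(ρ_X(g)⁻¹ x) − φ(ρ_X(g)⁻¹ x)‖.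 -/
open MeasureTheory

/-!
Equivariance of `ψ` gives `ψ x - ρ_Y(g) φ(ρ_X(g)⁻¹ x) = ρ_Y(g) (ψ - φ)(ρ_X(g)⁻¹ x)`. For `x ∈ K`
the kernel only sees `g ∈ M`, where `ρ_X(g)⁻¹ x` ranges over the compact set `ρ_X(M⁻¹) K` and
`‖ρ_Y(g)‖` is bounded by some `B`. Approximating `ψ` to within `ε / B` on that compact set makes
every integrand `ε`-close to `ψ x`, and averaging against a probability measure preserves this.
-/

theorem IsCompact.exists_pos_forall_norm_apply_le_mul {𝕜 α E F : Type*}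
    [NontriviallyNormedField 𝕜] [TopologicalSpace α]
    [NormedAddCommGroup E] [NormedSpace 𝕜 E] [NormedAddCommGroup F] [NormedSpace 𝕜 F]
    (T : α → E →ₗ[𝕜] F) (hT : Continuous fun p : α × E => T p.1 p.2)
    {M : Set α} (hM : IsCompact M) :
    ∃ B > 0, ∀ g ∈ M, ∀ v, ‖T g v‖ ≤ B * ‖v‖ := by
  have hsmall : ∀ᶠ v in nhds (0 : E), ∀ g ∈ M, ‖T g v‖ < 1 := by
    refine hM.eventually_forall_of_forall_eventually fun g _ => ?_
    have hcont : Continuous fun p : E × α => T p.2 p.1 := hT.comp continuous_swap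
    have hzero : T g 0 = 0 := map_zero _
    refine hcont.continuousAt.eventually (p := fun w => ‖w‖ < 1) ?_
    change ∀ᶠ w in nhds (T g 0), ‖w‖ < 1
    rw [hzero]
    exact Metric.eventually_nhds_iff_ball.mpr ⟨1, one_pos, fun w hw => mem_ball_zero_iff.mp hw⟩
  obtain ⟨r, hr, hball⟩ := Metric.eventually_nhds_iff_ball.mp hsmall
  obtain ⟨k, hk⟩ := NontriviallyNormedField.non_trivial (α := 𝕜)
  refine ⟨‖k‖ / r, div_pos (one_pos.trans hk) hr, fun g hg v => ?_⟩
  refine LinearMap.bound_of_shell (T g) hr hk (fun w hw_lower hw => ?_) v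
  calc ‖T g w‖ ≤ 1 := (hball w (mem_ball_zero_iff.mpr hw) g hg).le
    _ ≤ ‖k‖ / r * ‖w‖ := by
      rw [div_le_iff₀ (one_pos.trans hk)] at hw_lower
      rw [div_mul_eq_mul_div, le_div_iff₀ hr]
      linarith

theorem norm_sub_integral_le_of_ae_norm_sub_le {α E : Type*} [MeasurableSpace α]
    [NormedAddCommGroup E] [NormedSpace ℝ E] [CompleteSpace E]
    {μ : Measure α} [IsProbabilityMeasure μ]
    {f : α → E} {c : E} {ε : ℝ} (hf : AEStronglyMeasurable f μ)
    (h : ∀ᵐ a ∂μ, ‖c - f a‖ ≤ ε) :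
    ‖c - ∫ a, f a ∂μ‖ ≤ ε := by
  have hint : Integrable f μ := by
    refine (integrable_const (‖c‖ + ε)).mono' hf ?_
    filter_upwards [h] with a ha
    calc ‖f a‖ = ‖c - (c - f a)‖ := by rw [sub_sub_cancel]
      _ ≤ ‖c‖ + ‖c - f a‖ := norm_sub_le _ _
      _ ≤ ‖c‖ + ε := by linarith
  have hsub : c - ∫ a, f a ∂μ = ∫ a, (c - f a) ∂μ := by
    rw [integral_sub (integrable_const c) hint, integral_const, probReal_univ, one_smul]
  simpa [hsub] using norm_integral_le_of_norm_le_const (μ := μ) h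

theorem stmt_12_general (G X Y : Type*) [Group G] [TopologicalSpace G] [MeasurableSpace G]
    [BorelSpace G] [IsTopologicalGroup G]
    [NormedAddCommGroup X] [NormedSpace ℝ X]
    [NormedAddCommGroup Y] [NormedSpace ℝ Y] [FiniteDimensional ℝ Y]
    (ρX : G →* (X ≃ₗ[ℝ] X)) (ρY : G →* (Y ≃ₗ[ℝ] Y))
    (hρXcont : Continuous fun p : G × X => ρX p.1 p.2)
    (hρYcont : Continuous fun p : G × Y => ρY p.1 p.2)
    (μ : X → Measure G) (hprob : ∀ x, IsProbabilityMeasure (μ x))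
    (K : Set X) (hK : IsCompact K)
    (M : Set G) (hM : IsCompact M)
    (hsupp : ∀ x ∈ K, μ x Mᶜ = 0)
    (F : Set (X → Y)) (hFcont : ∀ φ ∈ F, Continuous φ)
    (huniv : ∀ (C : Set X), IsCompact C → ∀ (u : X → Y), Continuous u →
      ∀ δ > 0, ∃ φ ∈ F, ∀ x ∈ C, ‖u x - φ x‖ ≤ δ)
    (ψ : X → Y) (hψcont : Continuous ψ)
    (hψequiv : ∀ (g : G) (x : X), ψ (ρX g x) = ρY g (ψ x))
    (ε : ℝ) (hε : 0 < ε) :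
    ∃ φ ∈ F, ∀ x ∈ K,
      ‖ψ x - ∫ g, ρY g (φ ((ρX g)⁻¹ x)) ∂(μ x)‖ ≤ ε := by
  let C : Set X := (fun p : G × X => ρX p.1 p.2) '' (M⁻¹ ×ˢ K)
  have hC : IsCompact C := (hM.inv.prod hK).image hρXcont
  obtain ⟨B, hB, hρYle⟩ := hM.exists_pos_forall_norm_apply_le_mul
    (fun g => (ρY g : Y →ₗ[ℝ] Y)) hρYcont
  obtain ⟨φ, hφF, hφ⟩ := huniv C hC ψ hψcont (ε / B) (div_pos hε hB)
  refine ⟨φ, hφF, fun x hx => ?_⟩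
  have hinv : ∀ g, (ρX g)⁻¹ x = ρX g⁻¹ x := fun g => by rw [map_inv]
  have hcont : Continuous fun g => ρY g (φ ((ρX g)⁻¹ x)) := by
    simp only [hinv]
    exact hρYcont.comp (continuous_id.prodMk ((hFcont φ hφF).comp
      (hρXcont.comp (continuous_inv.prodMk continuous_const))))
  have hclose : ∀ g ∈ M, ‖ψ x - ρY g (φ ((ρX g)⁻¹ x))‖ ≤ ε := fun g hg => by
    have hmem : (ρX g)⁻¹ x ∈ C := ⟨(g⁻¹, x), ⟨Set.inv_mem_inv.mpr hg, hx⟩, (hinv g).symm⟩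
    have hψx : ψ x = ρY g (ψ ((ρX g)⁻¹ x)) := by
      rw [← hψequiv, show ρX g ((ρX g)⁻¹ x) = x from (ρX g).apply_symm_apply x]
    calc ‖ψ x - ρY g (φ ((ρX g)⁻¹ x))‖ = ‖ρY g (ψ ((ρX g)⁻¹ x) - φ ((ρX g)⁻¹ x))‖ := by
          rw [hψx, map_sub]
      _ ≤ B * (ε / B) := (hρYle g hg _).trans (mul_le_mul_of_nonneg_left (hφ _ hmem) hB.le)
      _ = ε := mul_div_cancel₀ ε hB.ne'
  have := hprob x
  exact norm_sub_integral_le_of_ae_norm_sub_le hcont.aestronglyMeasurable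
    (measure_eq_zero_iff_ae_notMem.mp (hsupp x hx) |>.mono fun g hg => hclose g (not_not.mp hg))

/-- Universality of symmetrization: if the base-function class F is a universal
approximator of continuous functions on compact sets, and h(·|x) is a
G-equivariant probability kernel whose supports over a compact set K lie in a
common compact M ⊆ G, then for any continuous G-equivariant ψ and ε > 0 there
is φ ∈ F so that the symmetrized function κ(x) = E_{h(g|x)}[ρ_Y(g) φ(ρ_X(g)⁻¹ x)]
is ε-close to ψ uniformly on K. -/
theorem stmt_12 (G X Y : Type*) [Group G] [TopologicalSpace G] [MeasurableSpace G]
    [BorelSpace G] [IsTopologicalGroup G]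
    [NormedAddCommGroup X] [NormedSpace ℝ X] [FiniteDimensional ℝ X]
    [NormedAddCommGroup Y] [NormedSpace ℝ Y] [FiniteDimensional ℝ Y]
    (ρX : G →* (X ≃ₗ[ℝ] X)) (ρY : G →* (Y ≃ₗ[ℝ] Y))
    (hρXcont : Continuous fun p : G × X => ρX p.1 p.2)
    (hρYcont : Continuous fun p : G × Y => ρY p.1 p.2)
    (μ : X → Measure G) (hprob : ∀ x, IsProbabilityMeasure (μ x))
    (hequiv : ∀ (g' : G) (x : X),
      μ (ρX g' x) = Measure.map (fun g => g' * g) (μ x))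
    (K : Set X) (hK : IsCompact K)
    (M : Set G) (hM : IsCompact M)
    (hsupp : ∀ x ∈ K, μ x Mᶜ = 0)
    (F : Set (X → Y)) (hFcont : ∀ φ ∈ F, Continuous φ)
    (huniv : ∀ (C : Set X), IsCompact C → ∀ (u : X → Y), Continuous u →
      ∀ δ > 0, ∃ φ ∈ F, ∀ x ∈ C, ‖u x - φ x‖ ≤ δ)
    (ψ : X → Y) (hψcont : Continuous ψ)
    (hψequiv : ∀ (g : G) (x : X), ψ (ρX g x) = ρY g (ψ x))
    (ε : ℝ) (hε : 0 < ε) :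
    ∃ φ ∈ F, ∀ x ∈ K,
      ‖ψ x - ∫ g, ρY g (φ ((ρX g)⁻¹ x)) ∂(μ x)‖ ≤ ε :=
  stmt_12_general G X Y ρX ρY hρXcont hρYcont μ hprob K hK M hM hsupp F hFcont huniv ψ hψcont
    hψequiv ε hε
end
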